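/- arXiv:1507.02905 — 6 statements merged into one kernel-verified Lean document; each statement's English description precedes it below -/
import Mathlib

section
/- Let S : ℝ² → ℝ be C² with ∂²S/∂θ∂Θ ≤ −ε < 0 everywhere and S(θ+1, Θ+1) = S(θ, Θ). Then S(θ,Θ)/|Θ−θ| → +∞ as |Θ−θ| → +∞, uniformly in θ. More precisely, S(θ,Θ) ≥ m − M|Θ−θ| + (ε/2)(Θ−θ)², where m = min_{θ∈[0,1]} S(θ,θ) and M = max_{θ∈[0,1]} |∂S/∂Θ(θ,θ)|. -/
/-!
Write `P = ∂S/∂Θ`. The twist condition makes `t ↦ P (t, u) + ε t` antitone, so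
`P (θ, u) ≥ P (u, u) + ε (u - θ)` for `u ≥ θ` and `P (θ, u) ≤ P (u, u) - ε (θ - u)` for `u ≤ θ`.
By periodicity `S (u, u) ≥ m` and `|P (u, u)| ≤ M` hold for every `u`, not only on `[0, 1]`.
Integrating `P (θ, ·)` from `θ` to `Θ` gives the quadratic lower bound, and a quadratic with
positive leading coefficient eventually dominates every linear function.
-/

open Set

theorem le_image_of_linear_le_deriv {f f' : ℝ → ℝ} {a b M ε : ℝ}
    (hf : ∀ u, HasDerivAt f (f' u) u) (hab : a ≤ b)
    (hf' : ∀ u ∈ Ioo a b, ε * (u - a) - M ≤ f' u) :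
    f a - M * (b - a) + ε / 2 * (b - a) ^ 2 ≤ f b := by
  set g : ℝ → ℝ := fun u => f u + M * (u - a) - ε / 2 * (u - a) ^ 2
  have hg : ∀ u, HasDerivAt g (f' u + M - ε * (u - a)) u := fun u =>
    (((hf u).fun_add (((hasDerivAt_id' u).sub_const a).const_mul M)).fun_sub
      ((((hasDerivAt_id' u).sub_const a).fun_pow 2).const_mul (ε / 2))).congr_deriv (by ring)
  have hmono : MonotoneOn g (Icc a b) :=
    monotoneOn_of_deriv_nonneg (convex_Icc a b)
      (fun u _ => (hg u).continuousAt.continuousWithinAt)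
      (fun u _ => (hg u).differentiableAt.differentiableWithinAt)
      (fun u hu => by
        rw [interior_Icc] at hu
        rw [(hg u).deriv]
        linarith [hf' u hu])
  have h := hmono (left_mem_Icc.2 hab) (right_mem_Icc.2 hab) hab
  simp only [g, sub_self] at h
  linarith

theorem le_image_of_deriv_le_linear {f f' : ℝ → ℝ} {a b M ε : ℝ}
    (hf : ∀ u, HasDerivAt f (f' u) u) (hba : b ≤ a)
    (hf' : ∀ u ∈ Ioo b a, f' u ≤ M - ε * (a - u)) :
    f a - M * (a - b) + ε / 2 * (a - b) ^ 2 ≤ f b := by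
  have hreflect : ∀ u, HasDerivAt (fun u => f (-u)) (-f' (-u)) u := fun u => by
    simpa [Function.comp_def] using (hf (-u)).comp u (hasDerivAt_neg u)
  have h := le_image_of_linear_le_deriv (M := M) (ε := ε) hreflect (neg_le_neg hba)
    fun u hu => by linarith [hf' (-u) ⟨by linarith [hu.2], by linarith [hu.1]⟩]
  simp only [neg_neg] at h
  rwa [show -b - -a = a - b by ring] at h

noncomputable def partialSnd (S : ℝ × ℝ → ℝ) (t u : ℝ) : ℝ := deriv (fun v => S (t, v)) u

section Twist

variable {S : ℝ × ℝ → ℝ}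

theorem hasDerivAt_partialSnd (hS : Differentiable ℝ S) (t u : ℝ) :
    HasDerivAt (fun v => S (t, v)) (partialSnd S t u) u :=
  (hS.comp ((differentiable_const t).prodMk differentiable_id) u).hasDerivAt

theorem partialSnd_eq_fderiv (hS : Differentiable ℝ S) (t u : ℝ) :
    partialSnd S t u = fderiv ℝ S (t, u) (0, 1) :=
  ((hS (t, u)).hasFDerivAt.comp_hasDerivAt u
    ((hasDerivAt_const u t).prodMk (hasDerivAt_id u))).deriv

theorem differentiable_partialSnd_fst (hS : ContDiff ℝ 2 S) (u : ℝ) :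
    Differentiable ℝ (fun t => partialSnd S t u) := by
  simp only [partialSnd_eq_fderiv (hS.differentiable (by norm_num))]
  exact (((hS.fderiv_right (by norm_num)).differentiable one_ne_zero).comp
    (differentiable_id.prodMk (differentiable_const u))).clm_apply (differentiable_const _)

theorem periodic_partialSnd_diag (hper : ∀ θ Θ : ℝ, S (θ + 1, Θ + 1) = S (θ, Θ)) :
    Function.Periodic (fun t => partialSnd S t t) 1 := fun t =>
  calc deriv (fun v => S (t + 1, v)) (t + 1) = deriv (fun v => S (t + 1, v + 1)) t :=
        (deriv_comp_add_const _ 1 t).symm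
    _ = partialSnd S t t := by simp only [hper]; rfl

theorem partialSnd_diag_add_le {ε : ℝ} (hS : ContDiff ℝ 2 S)
    (hmix : ∀ θ Θ : ℝ, deriv (fun t => partialSnd S t Θ) θ ≤ -ε)
    {t u : ℝ} (htu : t ≤ u) :
    partialSnd S u u + ε * (u - t) ≤ partialSnd S t u := by
  linarith [image_sub_le_mul_sub_of_deriv_le (differentiable_partialSnd_fst hS u) (hmix · u) htu]

theorem partialSnd_le_diag_sub {ε : ℝ} (hS : ContDiff ℝ 2 S)
    (hmix : ∀ θ Θ : ℝ, deriv (fun t => partialSnd S t Θ) θ ≤ -ε)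
    {t u : ℝ} (hut : u ≤ t) :
    partialSnd S t u ≤ partialSnd S u u - ε * (t - u) := by
  linarith [image_sub_le_mul_sub_of_deriv_le (differentiable_partialSnd_fst hS u) (hmix · u) hut]

theorem diag_sub_mul_abs_add_sq_le {ε M : ℝ} (hS : ContDiff ℝ 2 S)
    (hmix : ∀ θ Θ : ℝ, deriv (fun t => partialSnd S t Θ) θ ≤ -ε)
    (hM : ∀ u, |partialSnd S u u| ≤ M) (θ Θ : ℝ) :
    S (θ, θ) - M * |Θ - θ| + ε / 2 * (Θ - θ) ^ 2 ≤ S (θ, Θ) := by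
  have hderiv := hasDerivAt_partialSnd (hS.differentiable (by norm_num)) θ
  rcases le_total θ Θ with h | h
  · rw [abs_of_nonneg (sub_nonneg.2 h)]
    exact le_image_of_linear_le_deriv hderiv h fun u hu => by
      linarith [partialSnd_diag_add_le hS hmix hu.1.le, neg_abs_le (partialSnd S u u), hM u]
  · rw [abs_of_nonpos (sub_nonpos.2 h), neg_sub, ← neg_sub θ Θ, neg_sq]
    exact le_image_of_deriv_le_linear hderiv h fun u hu => by
      linarith [partialSnd_le_diag_sub hS hmix hu.2.le, le_abs_self (partialSnd S u u), hM u]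

end Twist

theorem exists_forall_mul_le_quadratic {ε : ℝ} (hε : 0 < ε) (m M A : ℝ) :
    ∃ R, ∀ s, R ≤ s → A * s ≤ m - M * s + ε / 2 * s ^ 2 := by
  refine ⟨max 1 (2 / ε * (A + M + |m|)), fun s hs => ?_⟩
  have hs1 : 1 ≤ s := le_of_max_le_left hs
  have hsε : 2 * (A + M + |m|) ≤ ε * s := by
    have := le_of_max_le_right hs
    rwa [div_mul_eq_mul_div, div_le_iff₀' hε] at this
  nlinarith [neg_abs_le m, abs_nonneg m]

/-- Coercivity of a generating function: if `S` is C², periodic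
(`S(θ+1,Θ+1)=S(θ,Θ)`) and the mixed partial is `≤ -ε < 0`, then
`S(θ,Θ) ≥ m − M|Θ−θ| + (ε/2)(Θ−θ)²` where `m = min_{[0,1]} S(θ,θ)` and
`M = max_{[0,1]} |∂S/∂Θ(θ,θ)|`; in particular `S(θ,Θ)/|Θ−θ| → +∞` uniformly. -/
theorem stmt1 (S : ℝ × ℝ → ℝ) (ε : ℝ) (hε : 0 < ε) (hS : ContDiff ℝ 2 S)
    (hper : ∀ θ Θ : ℝ, S (θ + 1, Θ + 1) = S (θ, Θ))
    (hmix : ∀ θ Θ : ℝ, deriv (fun t => deriv (fun u => S (t, u)) Θ) θ ≤ -ε)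
    (m M : ℝ)
    (hm : IsLeast ((fun θ => S (θ, θ)) '' Set.Icc (0:ℝ) 1) m)
    (hM : IsGreatest ((fun θ => |deriv (fun u => S (θ, u)) θ|) '' Set.Icc (0:ℝ) 1) M) :
    (∀ θ Θ : ℝ, m - M * |Θ - θ| + (ε/2) * (Θ - θ)^2 ≤ S (θ, Θ)) ∧
    (∀ A : ℝ, ∃ R : ℝ, ∀ θ Θ : ℝ, R ≤ |Θ - θ| → A * |Θ - θ| ≤ S (θ, Θ)) := by
  have image_Icc : ∀ g : ℝ → ℝ, Function.Periodic g 1 → g '' Icc 0 1 = range g :=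
    fun g hg => by simpa using hg.image_Icc one_pos 0
  rw [image_Icc _ fun t => hper t t] at hm
  rw [image_Icc (fun θ => |deriv (fun u => S (θ, u)) θ|)
    fun t => congrArg abs (periodic_partialSnd_diag hper t)] at hM
  have bound (θ Θ : ℝ) : m - M * |Θ - θ| + ε / 2 * (Θ - θ) ^ 2 ≤ S (θ, Θ) := by
    linarith [hm.2 (mem_range_self θ),
      diag_sub_mul_abs_add_sq_le hS hmix (fun u => hM.2 (mem_range_self u)) θ Θ]
  refine ⟨bound, fun A => ?_⟩
  obtain ⟨R, hR⟩ := exists_forall_mul_le_quadratic hε m M A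
  exact ⟨R, fun θ Θ h => (hR _ h).trans (by simpa only [sq_abs] using bound θ Θ)⟩
end

section
/- Let F : ℝ² → ℝ² be a lift of a positive conservative twist map and E ⊆ ℝ² a nonempty closed F-ordered set. Then the first projection π(θ,r) = θ restricted to E is injective, and π(E) is a closed subset of ℝ invariant under t ↦ t+1. -/
/-!
The order hypothesis forces `F` to move every point of `E` horizontally by almost the same
amount: a point `x ∈ E` is sandwiched between two integer translates of a fixed `p ∈ E`, whose
images are the translates of `F p`. The twist condition makes `F` expand vertical segments
horizontally by a factor at least `ε`, so points of `E` over a compact interval of abscissae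
have bounded height. Hence `E` meets each vertical strip in a compact set, and the projection of
`E` is closed. Injectivity comes from the same vertical expansion, applied to preimages under `F`.
-/

/-- `E ⊆ ℝ²` is `F`-ordered: invariant by `F` and by all integer horizontal
translations, and the first projection order is preserved by `F` on `E`. -/
def FOrdered (F : ℝ × ℝ → ℝ × ℝ) (E : Set (ℝ × ℝ)) : Prop :=
  F '' E = E ∧ (∀ k : ℤ, (fun x : ℝ × ℝ => (x.1 + (k : ℝ), x.2)) '' E = E) ∧
  ∀ x ∈ E, ∀ y ∈ E, x.1 < y.1 → (F x).1 < (F y).1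

open Set Function

theorem antilipschitzWith_of_le_deriv {f : ℝ → ℝ} {ε : ℝ} (hε : 0 < ε)
    (hf : Differentiable ℝ f) (hderiv : ∀ x, ε ≤ deriv f x) :
    AntilipschitzWith (Real.toNNReal ε⁻¹) f := by
  refine AntilipschitzWith.of_le_mul_dist fun x y => ?_
  rw [Real.coe_toNNReal _ (inv_nonneg.2 hε.le), Real.dist_eq, Real.dist_eq,
    le_inv_mul_iff₀ hε]
  rcases le_total x y with hxy | hyx
  · rw [abs_sub_comm, abs_of_nonneg (sub_nonneg.2 hxy), abs_sub_comm]
    exact (mul_sub_le_image_sub_of_le_deriv hf hderiv hxy).trans (le_abs_self _)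
  · rw [abs_of_nonneg (sub_nonneg.2 hyx)]
    exact (mul_sub_le_image_sub_of_le_deriv hf hderiv hyx).trans (le_abs_self _)

theorem periodic_fst_sub_of_lift {F : ℝ × ℝ → ℝ × ℝ}
    (hlift : ∀ θ r : ℝ, F (θ + 1, r) = ((F (θ, r)).1 + 1, (F (θ, r)).2)) (r : ℝ) :
    Periodic (fun θ => (F (θ, r)).1 - θ) 1 := fun θ => by
  simp only [hlift]
  ring

namespace FOrdered

variable {F : ℝ × ℝ → ℝ × ℝ} {E : Set (ℝ × ℝ)}

theorem injOn_fst (hE : FOrdered F E) (hfiber : ∀ θ, Injective fun r => (F (θ, r)).1) :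
    InjOn Prod.fst E := by
  obtain ⟨hFE, -, hmono⟩ := hE
  rintro _ hx _ hy hxy
  rw [← hFE] at hx hy
  obtain ⟨u, hu, rfl⟩ := hx
  obtain ⟨v, hv, rfl⟩ := hy
  have hfst : u.1 = v.1 := by
    by_contra hne
    rcases lt_or_gt_of_ne hne with h | h
    · exact (hmono u hu v hv h).ne hxy
    · exact (hmono v hv u hu h).ne' hxy
  have hsnd : u.2 = v.2 := hfiber u.1 <| by
    change (F (u.1, u.2)).1 = (F (u.1, v.2)).1
    rwa [Prod.mk.eta, hfst, Prod.mk.eta]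
  rw [Prod.ext hfst hsnd]

theorem image_add_one_image_fst (hE : FOrdered F E) :
    (fun t : ℝ => t + 1) '' (Prod.fst '' E) = Prod.fst '' E := by
  conv_rhs => rw [← hE.2.1 1]
  simp only [image_image, Int.cast_one]

theorem translate_mem (hE : FOrdered F E) {p : ℝ × ℝ} (hp : p ∈ E) (k : ℤ) :
    (p.1 + k, p.2) ∈ E := by
  rw [← hE.2.1 k]
  exact mem_image_of_mem _ hp

theorem abs_sub_displacement_lt (hE : FOrdered F E)
    (hper : ∀ r, Periodic (fun θ => (F (θ, r)).1 - θ) 1) {p x : ℝ × ℝ} (hp : p ∈ E)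
    (hx : x ∈ E) : |((F x).1 - x.1) - ((F p).1 - p.1)| < 2 := by
  set k : ℤ := ⌊x.1 - p.1⌋
  have hk := Int.floor_le (x.1 - p.1)
  have hk' := Int.lt_floor_add_one (x.1 - p.1)
  have htranslate : ∀ m : ℤ, (F (p.1 + m, p.2)).1 = (F p).1 + m := fun m => by
    have := (hper p.2).int_mul m p.1
    simp only [mul_one] at this
    linarith
  have hlow := hE.2.2 _ (hE.translate_mem hp (k - 1)) x hx (by push_cast; linarith)
  have hup := hE.2.2 x hx _ (hE.translate_mem hp (k + 1)) (by push_cast; linarith)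
  rw [htranslate] at hlow hup
  push_cast at hlow hup
  rw [abs_sub_lt_iff]
  constructor <;> linarith

theorem abs_snd_le (hE : FOrdered F E)
    (hper : ∀ r, Periodic (fun θ => (F (θ, r)).1 - θ) 1) {K : NNReal}
    (hfiber : ∀ θ, AntilipschitzWith K fun r => (F (θ, r)).1) {p x : ℝ × ℝ} (hp : p ∈ E)
    (hx : x ∈ E) : |x.2| ≤ K * (|(F p).1 - p.1| + 2 + |x.1| + |(F (x.1, 0)).1|) := by
  have hvert := (hfiber x.1).le_mul_dist x.2 0
  simp only [Real.dist_eq, sub_zero, Prod.mk.eta] at hvert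
  refine hvert.trans (mul_le_mul_of_nonneg_left ?_ K.coe_nonneg)
  have hdisp := abs_lt.1 (hE.abs_sub_displacement_lt hper hp hx)
  rw [abs_le]
  constructor <;> linarith [le_abs_self ((F p).1 - p.1), neg_abs_le ((F p).1 - p.1),
    le_abs_self x.1, neg_abs_le x.1, le_abs_self (F (x.1, 0)).1, neg_abs_le (F (x.1, 0)).1]

theorem isCompact_inter_preimage_fst_Icc (hE : FOrdered F E) (hcl : IsClosed E)
    (hF : Continuous F) (hper : ∀ r, Periodic (fun θ => (F (θ, r)).1 - θ) 1) {K : NNReal}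
    (hfiber : ∀ θ, AntilipschitzWith K fun r => (F (θ, r)).1) (a b : ℝ) :
    IsCompact (E ∩ Prod.fst ⁻¹' Icc a b) := by
  rcases E.eq_empty_or_nonempty with rfl | ⟨p, hp⟩
  · simp
  have hcont : Continuous fun θ : ℝ => |(F p).1 - p.1| + 2 + |θ| + |(F (θ, 0)).1| := by
    fun_prop
  obtain ⟨B, hB⟩ := (isCompact_Icc (a := a) (b := b)).bddAbove_image hcont.continuousOn
  have hsub : E ∩ Prod.fst ⁻¹' Icc a b ⊆ Icc a b ×ˢ Icc (-(K * B)) (K * B) := by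
    rintro x ⟨hx, hxab⟩
    have hheight := (hE.abs_snd_le hper hfiber hp hx).trans
      (mul_le_mul_of_nonneg_left (hB (mem_image_of_mem _ hxab)) K.coe_nonneg)
    exact ⟨hxab, abs_le.1 hheight⟩
  exact (isCompact_Icc.prod isCompact_Icc).of_isClosed_subset
    (hcl.inter (isClosed_Icc.preimage continuous_fst)) hsub

theorem isClosed_image_fst (hE : FOrdered F E) (hcl : IsClosed E)
    (hF : Continuous F) (hper : ∀ r, Periodic (fun θ => (F (θ, r)).1 - θ) 1) {K : NNReal}
    (hfiber : ∀ θ, AntilipschitzWith K fun r => (F (θ, r)).1) :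
    IsClosed (Prod.fst '' E) := by
  refine isClosed_of_closure_subset fun t ht => ?_
  have hstrip := ((hE.isCompact_inter_preimage_fst_Icc hcl hF hper hfiber (t - 1) (t + 1)).image
    continuous_fst).isClosed
  have hlocal : Ioo (t - 1) (t + 1) ∩ Prod.fst '' E ⊆
      Prod.fst '' (E ∩ Prod.fst ⁻¹' Icc (t - 1) (t + 1)) := by
    rintro _ ⟨hI, x, hx, rfl⟩
    exact ⟨x, ⟨hx, Ioo_subset_Icc_self hI⟩, rfl⟩
  have := closure_mono hlocal (isOpen_Ioo.inter_closure ⟨⟨by linarith, by linarith⟩, ht⟩)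
  rw [hstrip.closure_eq] at this
  exact image_mono inter_subset_left this

end FOrdered

theorem stmt4_general (F : ℝ × ℝ → ℝ × ℝ) (ε : ℝ) (hε : 0 < ε)
    (hF : ContDiff ℝ 1 F)
    (hlift : ∀ θ r : ℝ, F (θ + 1, r) = ((F (θ, r)).1 + 1, (F (θ, r)).2))
    (htwist : ∀ x : ℝ × ℝ, ε < deriv (fun r => (F (x.1, r)).1) x.2 ∧
      deriv (fun r => (F (x.1, r)).1) x.2 < 1 / ε)
    (E : Set (ℝ × ℝ)) (hcl : IsClosed E) (hord : FOrdered F E) :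
    Set.InjOn (fun x : ℝ × ℝ => x.1) E ∧ IsClosed (Prod.fst '' E) ∧
      (fun t : ℝ => t + 1) '' (Prod.fst '' E) = Prod.fst '' E := by
  have hdiff : ∀ θ : ℝ, Differentiable ℝ fun r => (F (θ, r)).1 := fun θ =>
    ((hF.differentiable one_ne_zero).comp ((differentiable_const θ).prodMk differentiable_id)).fst
  have hfiber : ∀ θ, AntilipschitzWith (Real.toNNReal ε⁻¹) fun r => (F (θ, r)).1 :=
    fun θ => antilipschitzWith_of_le_deriv hε (hdiff θ) fun r => (htwist (θ, r)).1.le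
  have hper := periodic_fst_sub_of_lift hlift
  exact ⟨hord.injOn_fst fun θ => (hfiber θ).injective,
    hord.isClosed_image_fst hcl hF.continuous hper hfiber, hord.image_add_one_image_fst⟩

/-- For a lift `F` of a positive conservative twist map and a nonempty closed
`F`-ordered set `E`, the first projection is injective on `E`, and `π(E)` is a
closed subset of `ℝ` invariant under `t ↦ t + 1`. -/
theorem stmt4 (F Finv : ℝ × ℝ → ℝ × ℝ) (ε : ℝ) (hε : 0 < ε)
    (hF : ContDiff ℝ 1 F) (hFinv : Continuous Finv)
    (hl : Function.LeftInverse Finv F) (hr : Function.RightInverse Finv F)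
    (hlift : ∀ θ r : ℝ, F (θ + 1, r) = ((F (θ, r)).1 + 1, (F (θ, r)).2))
    (htwist : ∀ x : ℝ × ℝ, ε < deriv (fun r => (F (x.1, r)).1) x.2 ∧
      deriv (fun r => (F (x.1, r)).1) x.2 < 1 / ε)
    (E : Set (ℝ × ℝ)) (hne : E.Nonempty) (hcl : IsClosed E) (hord : FOrdered F E) :
    Set.InjOn (fun x : ℝ × ℝ => x.1) E ∧ IsClosed (Prod.fst '' E) ∧
      (fun t : ℝ => t + 1) '' (Prod.fst '' E) = Prod.fst '' E :=
  stmt4_general F ε hε hF hlift htwist E hcl hord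
end

section
/- For the standard map f_λ(θ,r) = (θ + r + λ sin 2πθ, r + λ sin 2πθ): if the graph of a continuous ψ : 𝕋 → ℝ is invariant under f_λ, then g_λ(θ) := θ + λ sin 2πθ + ψ(θ) (mod 1) is an orientation-preserving homeomorphism of 𝕋 with inverse g_λ⁻¹(θ) = θ − ψ(θ), and consequently g_λ(θ) + g_λ⁻¹(θ) = 2θ + λ sin 2πθ. Hence if λ > 1/π, f_λ has no continuous invariant graph. -/
open Real

/-! If the graph of `ψ` is invariant, then `g θ = θ + λ sin 2πθ + ψ θ` is the first coordinate of
`f_λ (θ, ψ θ)` and `θ ↦ θ - ψ θ` that of `f_λ⁻¹ (θ, ψ θ)`, so the two maps are mutually inverse.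
Being a continuous injective lift of degree one, `g` is increasing, hence so is its inverse and
so is their sum `2θ + λ sin 2πθ`. But the derivative of the latter at `θ = 1/2` is `2 - 2πλ`,
which is negative for `λ > 1/π`. -/

theorem Continuous.strictMono_of_inj_of_lt {α δ : Type*} [ConditionallyCompleteLinearOrder α]
    [TopologicalSpace α] [OrderTopology α] [DenselyOrdered α] [LinearOrder δ]
    [TopologicalSpace δ] [OrderClosedTopology δ] {f : α → δ} (hf_c : Continuous f)
    (hf_i : Function.Injective f) {a b : α} (hab : a < b) (hfab : f a < f b) : StrictMono f :=
  (hf_c.strictMono_of_inj hf_i).resolve_right fun hanti => (hanti hab).not_gt hfab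

theorem StrictMono.strictMono_of_rightInverse {α β : Type*} [LinearOrder α] [Preorder β]
    {g : α → β} {h : β → α} (hg : StrictMono g) (hgh : Function.RightInverse h g) :
    StrictMono h := fun a b hab => hg.lt_iff_lt.mp (by rwa [hgh a, hgh b])

theorem not_monotone_two_mul_add_sin {lam : ℝ} (hlam : 1 / π < lam) :
    ¬ Monotone (fun θ : ℝ => 2 * θ + lam * sin (2 * π * θ)) := by
  intro hmono
  have hderiv : HasDerivAt (fun θ : ℝ => 2 * θ + lam * sin (2 * π * θ))
      (2 * 1 + lam * (cos (2 * π * (1 / 2)) * (2 * π * 1))) (1 / 2) :=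
    ((hasDerivAt_id _).const_mul 2).add
      ((((hasDerivAt_id _).const_mul (2 * π)).sin).const_mul lam)
  have hnonneg := hderiv.nonneg_of_monotone hmono
  rw [show 2 * π * (1 / 2 : ℝ) = π by ring, cos_pi] at hnonneg
  have : 1 < π * lam := by rwa [div_lt_iff₀' pi_pos] at hlam
  linarith

namespace StandardMap

noncomputable def g (lam : ℝ) (ψ : ℝ → ℝ) (θ : ℝ) : ℝ := θ + lam * sin (2 * π * θ) + ψ θ

def gInv (ψ : ℝ → ℝ) (θ : ℝ) : ℝ := θ - ψ θ

variable {lam : ℝ} {ψ : ℝ → ℝ}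

theorem leftInverse_gInv_g
    (hinv1 : ∀ θ, ψ (θ + ψ θ + lam * sin (2 * π * θ)) = ψ θ + lam * sin (2 * π * θ)) :
    Function.LeftInverse (gInv ψ) (g lam ψ) := by
  intro θ
  simp only [g, gInv, add_right_comm θ, hinv1]
  ring

theorem rightInverse_gInv_g
    (hinv2 : ∀ θ, ψ (θ - ψ θ) = ψ θ - lam * sin (2 * π * (θ - ψ θ))) :
    Function.RightInverse (gInv ψ) (g lam ψ) := by
  intro θ
  simp only [g, gInv, hinv2]
  ring

theorem g_add_one (hper : ∀ θ, ψ (θ + 1) = ψ θ) (θ : ℝ) :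
    g lam ψ (θ + 1) = g lam ψ θ + 1 := by
  have hsin : sin (2 * π * (θ + 1)) = sin (2 * π * θ) := by
    rw [mul_add, mul_one, sin_add_two_pi]
  simp only [g, hsin, hper]
  ring

theorem continuous_g (hψc : Continuous ψ) : Continuous (g lam ψ) := by
  unfold g
  fun_prop

theorem strictMono_g (hψc : Continuous ψ) (hper : ∀ θ, ψ (θ + 1) = ψ θ)
    (hinv1 : ∀ θ, ψ (θ + ψ θ + lam * sin (2 * π * θ)) = ψ θ + lam * sin (2 * π * θ)) :
    StrictMono (g lam ψ) :=
  (continuous_g hψc).strictMono_of_inj_of_lt (leftInverse_gInv_g hinv1).injective zero_lt_one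
    (by rw [← zero_add 1, g_add_one hper]; linarith)

theorem g_add_gInv (lam : ℝ) (ψ : ℝ → ℝ) (θ : ℝ) :
    g lam ψ θ + gInv ψ θ = 2 * θ + lam * sin (2 * π * θ) := by
  simp only [g, gInv]
  ring

end StandardMap

open StandardMap in
/-- Standard family: if the graph of a continuous periodic `ψ` is invariant under
the standard map `f_λ` (invariance of the graph under `f_λ` and `f_λ⁻¹` expressed
on lifts), then `g_λ(θ) = θ + λ sin 2πθ + ψ(θ)` is an increasing circle
homeomorphism lift with inverse `θ ↦ θ − ψ(θ)`, so
`g_λ(θ) + g_λ⁻¹(θ) = 2θ + λ sin 2πθ`; consequently no such `ψ` exists if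
`λ > 1/π`. -/
theorem stmt9 (lam : ℝ) (ψ : ℝ → ℝ) (hψc : Continuous ψ)
    (hper : ∀ θ : ℝ, ψ (θ + 1) = ψ θ)
    (hinv1 : ∀ θ : ℝ, ψ (θ + ψ θ + lam * Real.sin (2 * π * θ)) =
      ψ θ + lam * Real.sin (2 * π * θ))
    (hinv2 : ∀ θ : ℝ, ψ (θ - ψ θ) = ψ θ - lam * Real.sin (2 * π * (θ - ψ θ))) :
    Function.LeftInverse (fun θ => θ - ψ θ)
      (fun θ => θ + lam * Real.sin (2 * π * θ) + ψ θ) ∧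
    Function.RightInverse (fun θ => θ - ψ θ)
      (fun θ => θ + lam * Real.sin (2 * π * θ) + ψ θ) ∧
    StrictMono (fun θ => θ + lam * Real.sin (2 * π * θ) + ψ θ) ∧
    (∀ θ : ℝ, (θ + lam * Real.sin (2 * π * θ) + ψ θ) + (θ - ψ θ) =
      2 * θ + lam * Real.sin (2 * π * θ)) ∧
    (1 / π < lam → False) := by
  have hmono : StrictMono (g lam ψ) := strictMono_g hψc hper hinv1
  have hri : Function.RightInverse (gInv ψ) (g lam ψ) := rightInverse_gInv_g hinv2
  refine ⟨leftInverse_gInv_g hinv1, hri, hmono, g_add_gInv lam ψ, fun hlam => ?_⟩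
  have hsum : StrictMono fun θ => g lam ψ θ + gInv ψ θ :=
    hmono.add (hmono.strictMono_of_rightInverse hri)
  simp only [g_add_gInv] at hsum
  exact not_monotone_two_mul_add_sin hlam hsum.monotone
end

section
/- Let (F_k)_{k∈ℤ} be a continuous quasi-hyperbolic linear cocycle on a finite-dimensional normed vector bundle over a compact metric space K, and set E^s = {v : sup_{k≥0} ‖F_k v‖ < ∞}. Then (F_n restricted to E^s)_{n≥0} is uniformly exponentially contracting: there exist C_0 > 0 and 0 < ρ < 1 such that ‖F_n v‖ ≤ C_0 ρⁿ ‖v‖ for all v ∈ E^s and n ≥ 0. Symmetrically for E^u = {v : sup_{k≤0} ‖F_k v‖ < ∞} under backward iteration. -/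
/-!
Compactness of `K × S(E)` and quasi-hyperbolicity give, for every `L`, a time `N` such that no
nonzero vector has its orbit bounded by `L‖w‖` on all of `[-N, ∞)`. Re-basing a vector of `E^s`
at a time where its orbit exceeds half its supremum, this bounds the forward orbit by `M‖v‖`
uniformly; applied again with `L = 2M` to `F_N v`, it shows that vectors of `E^s` are halved after
a fixed time `N`, and iterating gives the rate `ρ = 2^{-1/N}`. The backward statement is the
forward one for the reversed cocycle `k ↦ F_{-k}` over `k ↦ ϕ_{-k}`.
-/

open Set

structure IsContinuousCocycle {K E : Type*} [TopologicalSpace K] [NormedAddCommGroup E]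
    [NormedSpace ℝ E] (ϕ : ℤ → K → K) (F : ℤ → K → E →L[ℝ] E) : Prop where
  continuous : ∀ k, Continuous fun x => F k x
  map_zero : ∀ x, F 0 x = ContinuousLinearMap.id ℝ E
  map_add : ∀ m n x, F (m + n) x = (F m (ϕ n x)).comp (F n x)

def IsQuasiHyperbolic {K E : Type*} [NormedAddCommGroup E] [NormedSpace ℝ E]
    (F : ℤ → K → E →L[ℝ] E) : Prop :=
  ∀ x v, v ≠ 0 → ∀ C : ℝ, ∃ k, C < ‖F k x v‖

/-- `v ∈ E^s_x`. -/
def IsForwardBounded {K E : Type*} [NormedAddCommGroup E] [NormedSpace ℝ E]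
    (F : ℤ → K → E →L[ℝ] E) (x : K) (v : E) : Prop :=
  ∃ C, ∀ k : ℤ, 0 ≤ k → ‖F k x v‖ ≤ C

section

variable {K E : Type*} [NormedAddCommGroup E] [NormedSpace ℝ E]
  {ϕ : ℤ → K → K} {F : ℤ → K → E →L[ℝ] E} {x : K} {v : E}

theorem le_geometric_of_le_half {u : ℕ → ℝ} {M : ℝ} {N : ℕ} (hN : N ≠ 0) (hu0 : 0 ≤ u 0)
    (hM0 : 0 ≤ M) (hM : ∀ m n, u (n + m) ≤ M * u m) (hhalf : ∀ m, u (N + m) ≤ u m / 2)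
    (n : ℕ) : u n ≤ 2 * M * ((1 / 2 : ℝ) ^ (N⁻¹ : ℝ)) ^ n * u 0 := by
  set ρ : ℝ := (1 / 2 : ℝ) ^ (N⁻¹ : ℝ)
  have hρ0 : 0 ≤ ρ := by positivity
  have hρ1 : ρ ≤ 1 := Real.rpow_le_one (by norm_num) (by norm_num) (by positivity)
  have hρN : ρ ^ N = 1 / 2 := Real.rpow_inv_natCast_pow (by norm_num) hN
  have hblock : ∀ j, u (N * j) ≤ (1 / 2) ^ j * u 0 := by
    intro j
    induction j with
    | zero => simp
    | succ j ih =>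
      calc u (N * (j + 1)) = u (N + N * j) := by ring_nf
        _ ≤ u (N * j) / 2 := hhalf _
        _ ≤ (1 / 2) ^ j * u 0 / 2 := by gcongr
        _ = (1 / 2) ^ (j + 1) * u 0 := by ring
  obtain ⟨j, r, hr, rfl⟩ : ∃ j r, r < N ∧ n = r + N * j :=
    ⟨n / N, n % N, Nat.mod_lt _ (Nat.pos_of_ne_zero hN), by rw [add_comm, Nat.div_add_mod]⟩
  have hρr : 1 / 2 ≤ ρ ^ r := hρN ▸ pow_le_pow_of_le_one hρ0 hρ1 hr.le
  calc u (r + N * j) ≤ M * u (N * j) := hM _ _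
    _ ≤ M * ((1 / 2) ^ j * u 0) := by gcongr; exact hblock j
    _ = 2 * M * (1 / 2 * (ρ ^ N) ^ j) * u 0 := by rw [hρN]; ring
    _ ≤ 2 * M * (ρ ^ r * (ρ ^ N) ^ j) * u 0 := by gcongr
    _ = 2 * M * ρ ^ (r + N * j) * u 0 := by rw [pow_add, pow_mul]

namespace IsContinuousCocycle

variable [TopologicalSpace K]

theorem apply_apply (hF : IsContinuousCocycle ϕ F) (m n : ℤ) (x : K) (v : E) :
    F m (ϕ n x) (F n x v) = F (m + n) x v := by
  rw [hF.map_add]; rfl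

theorem reverse (hF : IsContinuousCocycle ϕ F) :
    IsContinuousCocycle (fun k => ϕ (-k)) (fun k => F (-k)) where
  continuous k := hF.continuous (-k)
  map_zero x := by simpa using hF.map_zero x
  map_add m n x := by rw [neg_add]; exact hF.map_add (-m) (-n) x

end IsContinuousCocycle

theorem IsQuasiHyperbolic.reverse (hqh : IsQuasiHyperbolic F) :
    IsQuasiHyperbolic fun k => F (-k) := fun x v hv C => by
  obtain ⟨k, hk⟩ := hqh x v hv C
  exact ⟨-k, by simpa using hk⟩

namespace IsForwardBounded

theorem norm_apply_le_ciSup (h : IsForwardBounded F x v) {k : ℤ} (hk : 0 ≤ k) :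
    ‖F k x v‖ ≤ ⨆ n : ℕ, ‖F n x v‖ := by
  obtain ⟨C, hC⟩ := h
  lift k to ℕ using hk
  exact le_ciSup ⟨C, by rintro _ ⟨n, rfl⟩; exact hC n n.cast_nonneg⟩ k

theorem shift [TopologicalSpace K] (hF : IsContinuousCocycle ϕ F) (h : IsForwardBounded F x v)
    {n : ℤ} (hn : 0 ≤ n) : IsForwardBounded F (ϕ n x) (F n x v) := by
  obtain ⟨C, hC⟩ := h
  exact ⟨C, fun k hk => hF.apply_apply k n x v ▸ hC _ (by omega)⟩

end IsForwardBounded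

variable [TopologicalSpace K] [CompactSpace K]

theorem exists_forall_opNorm_le (hcont : ∀ k, Continuous fun x => F k x) (N : ℕ) :
    ∃ D, ∀ r < N, ∀ x, ‖F r x‖ ≤ D := by
  choose b hb using fun r : ℕ => (isCompact_range (hcont r)).isBounded.exists_norm_le
  obtain ⟨D, hD⟩ := ((Finset.range N).image b).exists_le
  exact ⟨D, fun r hr x => (hb r _ ⟨x, rfl⟩).trans (hD _ (Finset.mem_image_of_mem b (by simpa)))⟩

namespace IsQuasiHyperbolic

variable [FiniteDimensional ℝ E]

theorem exists_eq_zero_of_norm_le (hcont : ∀ k, Continuous fun x => F k x)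
    (hqh : IsQuasiHyperbolic F) (L : ℝ) :
    ∃ N : ℕ, ∀ y w, (∀ i : ℤ, -N ≤ i → ‖F i y w‖ ≤ L * ‖w‖) → w = 0 := by
  set U : ℕ → Set (K × E) := fun N => ⋃ i : ℤ, ⋃ _ : -N ≤ i, {z | L < ‖F i z.1 z.2‖}
  have hU_open : ∀ N, IsOpen (U N) := fun N => isOpen_iUnion fun i => isOpen_iUnion fun _ =>
    isOpen_lt continuous_const (((hcont i).comp continuous_fst).clm_apply continuous_snd).norm
  have hU_mono : Monotone U := fun N N' hN => iUnion_mono fun i =>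
    iUnion_subset fun hi => subset_iUnion_of_subset (by omega) subset_rfl
  have hcover : univ ×ˢ Metric.sphere (0 : E) 1 ⊆ ⋃ N, U N := by
    rintro ⟨y, w⟩ ⟨-, hw⟩
    obtain ⟨i, hi⟩ := hqh y w (ne_zero_of_mem_unit_sphere ⟨w, hw⟩) L
    exact mem_iUnion.2 ⟨(-i).toNat, mem_iUnion₂.2 ⟨i, by omega, hi⟩⟩
  obtain ⟨N, hN⟩ := (isCompact_univ.prod (isCompact_sphere 0 1)).elim_directed_cover U hU_open
    hcover hU_mono.directed_le
  refine ⟨N, fun y w hle => by_contra fun hw => ?_⟩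
  have hw' : 0 < ‖w‖ := norm_pos_iff.2 hw
  obtain ⟨i, hi, hLi⟩ := mem_iUnion₂.1 (hN (mk_mem_prod trivial
    (show ‖w‖⁻¹ • w ∈ Metric.sphere (0 : E) 1 by simp [norm_smul, hw'.ne'])))
  have hLw : L < ‖w‖⁻¹ * ‖F i y w‖ := by simpa [norm_smul, hw'.ne'] using hLi
  rw [lt_inv_mul_iff₀ hw', mul_comm] at hLw
  exact (hle i hi).not_gt hLw

theorem exists_norm_le_mul (hF : IsContinuousCocycle ϕ F) (hqh : IsQuasiHyperbolic F) :
    ∃ M, 0 < M ∧ ∀ x v, IsForwardBounded F x v → ∀ k : ℤ, 0 ≤ k → ‖F k x v‖ ≤ M * ‖v‖ := by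
  obtain ⟨N, hN⟩ := hqh.exists_eq_zero_of_norm_le hF.continuous 2
  obtain ⟨D, hD⟩ := exists_forall_opNorm_le hF.continuous N
  refine ⟨max (2 * D) 1, one_pos.trans_le (le_max_right _ _), fun x v hv k hk => ?_⟩
  rcases eq_or_ne v 0 with rfl | hv0
  · simp
  set s := ⨆ n : ℕ, ‖F n x v‖
  have hs : 0 < s :=
    (norm_pos_iff.2 hv0).trans_le (by simpa [hF.map_zero] using hv.norm_apply_le_ciSup le_rfl)
  obtain ⟨k₀, hk₀⟩ := exists_lt_of_lt_ciSup (half_lt_self hs)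
  have hk₀N : k₀ < N := by
    by_contra! hNk₀
    have hzero : F k₀ x v = 0 := hN _ _ fun i hi => by
      rw [hF.apply_apply]
      linarith [hv.norm_apply_le_ciSup (k := i + k₀) (by omega)]
    rw [hzero, norm_zero] at hk₀
    linarith
  calc ‖F k x v‖ ≤ s := hv.norm_apply_le_ciSup hk
    _ ≤ 2 * ‖F k₀ x v‖ := by linarith
    _ ≤ 2 * (D * ‖v‖) := by gcongr; exact (F _ x).le_of_opNorm_le (hD k₀ hk₀N x) v
    _ ≤ max (2 * D) 1 * ‖v‖ := by rw [← mul_assoc]; gcongr; exact le_max_left _ _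

theorem exists_norm_le_half (hF : IsContinuousCocycle ϕ F) (hqh : IsQuasiHyperbolic F) :
    ∃ N : ℕ, N ≠ 0 ∧ ∀ x v, IsForwardBounded F x v → ‖F N x v‖ ≤ ‖v‖ / 2 := by
  obtain ⟨M, hM0, hM⟩ := hqh.exists_norm_le_mul hF
  obtain ⟨N, hN⟩ := hqh.exists_eq_zero_of_norm_le hF.continuous (2 * M)
  refine ⟨N + 1, N.succ_ne_zero, fun x v hv => le_of_not_gt fun hlt => ?_⟩
  have hzero : F (N + 1 : ℕ) x v = 0 := hN _ _ fun i hi => by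
    rw [hF.apply_apply]
    calc ‖F (i + (N + 1 : ℕ)) x v‖ ≤ M * ‖v‖ := hM x v hv _ (by omega)
      _ ≤ 2 * M * ‖F (N + 1 : ℕ) x v‖ := by nlinarith
  rw [hzero, norm_zero] at hlt
  linarith [norm_nonneg v]

theorem exists_forward_contraction (hF : IsContinuousCocycle ϕ F) (hqh : IsQuasiHyperbolic F) :
    ∃ C₀ : ℝ, 0 < C₀ ∧ ∃ ρ : ℝ, ρ ∈ Ioo (0 : ℝ) 1 ∧
      ∀ x v, IsForwardBounded F x v → ∀ n : ℕ, ‖F n x v‖ ≤ C₀ * ρ ^ n * ‖v‖ := by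
  obtain ⟨M, hM0, hM⟩ := hqh.exists_norm_le_mul hF
  obtain ⟨N, hN0, hN⟩ := hqh.exists_norm_le_half hF
  refine ⟨2 * M, by positivity, (1 / 2 : ℝ) ^ (N⁻¹ : ℝ),
    ⟨by positivity, Real.rpow_lt_one (by norm_num) (by norm_num) (by positivity)⟩,
    fun x v hv n => ?_⟩
  have hshift (m : ℕ) : IsForwardBounded F (ϕ m x) (F m x v) := hv.shift hF m.cast_nonneg
  simpa [hF.map_zero] using le_geometric_of_le_half (u := fun n : ℕ => ‖F n x v‖) hN0
    (norm_nonneg _) hM0.le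
    (fun m n => by simpa [hF.apply_apply] using hM _ _ (hshift m) n n.cast_nonneg)
    (fun m => by simpa [hF.apply_apply] using hN _ _ (hshift m)) n

end IsQuasiHyperbolic

end

theorem stmt12_general {K : Type*} [MetricSpace K] [CompactSpace K]
    {E : Type*} [NormedAddCommGroup E] [NormedSpace ℝ E] [FiniteDimensional ℝ E]
    (ϕ : ℤ → K → K)
    (F : ℤ → K → E →L[ℝ] E)
    (hFcont : ∀ k, Continuous fun x => F k x)
    (hF0 : ∀ x, F 0 x = ContinuousLinearMap.id ℝ E)
    (hFcoc : ∀ m n : ℤ, ∀ x, F (m + n) x = (F m (ϕ n x)).comp (F n x))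
    (hqh : ∀ x : K, ∀ v : E, v ≠ 0 → ∀ C : ℝ, ∃ k : ℤ, C < ‖F k x v‖) :
    ∃ C₀ : ℝ, 0 < C₀ ∧ ∃ ρ : ℝ, ρ ∈ Set.Ioo (0 : ℝ) 1 ∧
      (∀ x : K, ∀ v : E, (∃ C, ∀ k : ℤ, 0 ≤ k → ‖F k x v‖ ≤ C) →
        ∀ n : ℕ, ‖F n x v‖ ≤ C₀ * ρ ^ n * ‖v‖) ∧
      (∀ x : K, ∀ v : E, (∃ C, ∀ k : ℤ, k ≤ 0 → ‖F k x v‖ ≤ C) →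
        ∀ n : ℕ, ‖F (-(n : ℤ)) x v‖ ≤ C₀ * ρ ^ n * ‖v‖) := by
  have hF : IsContinuousCocycle ϕ F := ⟨hFcont, hF0, hFcoc⟩
  have hQH : IsQuasiHyperbolic F := hqh
  obtain ⟨C₁, hC₁, ρ₁, hρ₁, hfwd⟩ := hQH.exists_forward_contraction hF
  obtain ⟨C₂, -, ρ₂, hρ₂, hbwd⟩ := hQH.reverse.exists_forward_contraction hF.reverse
  refine ⟨max C₁ C₂, lt_max_of_lt_left hC₁, max ρ₁ ρ₂,
    ⟨lt_max_of_lt_left hρ₁.1, max_lt hρ₁.2 hρ₂.2⟩, fun x v hv n => ?_, fun x v hv n => ?_⟩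
  · refine (hfwd x v hv n).trans ?_
    gcongr <;> simp [hρ₁.1.le]
  · obtain ⟨C, hC⟩ := hv
    refine (hbwd x v ⟨C, fun k hk => hC (-k) (by omega)⟩ n).trans ?_
    gcongr <;> simp [hρ₂.1.le]

/-- A continuous quasi-hyperbolic linear cocycle `(F_k)_{k∈ℤ}` over a
homeomorphism-flow `ϕ` of a compact metric space `K` on a finite-dimensional
normed space `E` is uniformly exponentially contracting on
`E^s = {v : sup_{k≥0} ‖F_k v‖ < ∞}` and, symmetrically, uniformly contracting
under backward iteration on `E^u = {v : sup_{k≤0} ‖F_k v‖ < ∞}`. -/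
theorem stmt12 {K : Type*} [MetricSpace K] [CompactSpace K]
    {E : Type*} [NormedAddCommGroup E] [NormedSpace ℝ E] [FiniteDimensional ℝ E]
    (ϕ : ℤ → K → K) (hϕcont : ∀ k, Continuous (ϕ k))
    (hϕ0 : ∀ x, ϕ 0 x = x) (hϕadd : ∀ m n : ℤ, ∀ x, ϕ (m + n) x = ϕ m (ϕ n x))
    (F : ℤ → K → E →L[ℝ] E)
    (hFcont : ∀ k, Continuous fun x => F k x)
    (hF0 : ∀ x, F 0 x = ContinuousLinearMap.id ℝ E)
    (hFcoc : ∀ m n : ℤ, ∀ x, F (m + n) x = (F m (ϕ n x)).comp (F n x))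
    (hqh : ∀ x : K, ∀ v : E, v ≠ 0 → ∀ C : ℝ, ∃ k : ℤ, C < ‖F k x v‖) :
    ∃ C₀ : ℝ, 0 < C₀ ∧ ∃ ρ : ℝ, ρ ∈ Set.Ioo (0 : ℝ) 1 ∧
      (∀ x : K, ∀ v : E, (∃ C, ∀ k : ℤ, 0 ≤ k → ‖F k x v‖ ≤ C) →
        ∀ n : ℕ, ‖F n x v‖ ≤ C₀ * ρ ^ n * ‖v‖) ∧
      (∀ x : K, ∀ v : E, (∃ C, ∀ k : ℤ, k ≤ 0 → ‖F k x v‖ ≤ C) →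
        ∀ n : ℕ, ‖F (-(n : ℤ)) x v‖ ≤ C₀ * ρ ^ n * ‖v‖) :=
  stmt12_general ϕ F hFcont hF0 hFcoc hqh
end

section
/- For the standard map with |λ| > √(1+π²)/π: along any minimizing Aubry–Mather orbit (θ_n, r_n) with rotation number in (−1,1), one has |sin 2πθ_n| < 1/|λ|, hence |cos 2πθ_n| > √(1 − 1/λ²), and the minimizing condition 2 + 2πλ cos 2πθ_n ≥ 0 forces 2πλ cos 2πθ_n > 2. Consequently the cone C = {(v₁,v₂) : v₁v₂ ≥ 0} satisfies Df(C) ⊆ C with ‖Df v‖ ≥ √2 ‖v‖ for v ∈ C along the orbit, and the complementary cone is similarly invariant and expanded under Df⁻¹; hence the union of minimizing Aubry–Mather sets is uniformly hyperbolic. -/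
open Real

set_option maxHeartbeats 1000000 in
/-- Goroff: for the standard map with `|λ| > √(1+π²)/π`, along any minimizing
Aubry–Mather orbit with rotation number in `(−1,1)` one has
`|sin 2πθ_n| < 1/|λ|`, hence `|cos 2πθ_n| > √(1−1/λ²)`, the minimizing
condition forces `2πλ cos 2πθ_n > 2`, and the cone `{v₁v₂ ≥ 0}` is invariant
and expanded (factor `√2` in norm) by `Df`, while the complementary cone is
invariant and expanded by `Df⁻¹`. -/
theorem stmt14 (lam : ℝ) (hlam : Real.sqrt (1 + π ^ 2) / π < |lam|)
    (θ : ℤ → ℝ)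
    (hEL : ∀ n : ℤ, θ (n + 1) - 2 * θ n + θ (n - 1) = lam * Real.sin (2 * π * θ n))
    (hd1 : ∀ n : ℤ, θ n - θ (n + 1) ∈ Set.Ioo (-1 : ℝ) 1)
    (hd2 : ∀ n : ℤ, θ n - θ (n - 1) ∈ Set.Ioo (-1 : ℝ) 1)
    (hopp : ∀ n : ℤ, (θ n - θ (n + 1)) * (θ n - θ (n - 1)) ≤ 0)
    (hmin : ∀ n : ℤ, 0 ≤ 2 + 2 * π * lam * Real.cos (2 * π * θ n)) :
    ∀ n : ℤ,
      |Real.sin (2 * π * θ n)| < 1 / |lam| ∧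
      Real.sqrt (1 - 1 / lam ^ 2) < |Real.cos (2 * π * θ n)| ∧
      2 < 2 * π * lam * Real.cos (2 * π * θ n) ∧
      (∀ v : ℝ × ℝ, 0 ≤ v.1 * v.2 →
        0 ≤ ((1 + 2 * π * lam * Real.cos (2 * π * θ n)) * v.1 + v.2) *
            ((2 * π * lam * Real.cos (2 * π * θ n)) * v.1 + v.2) ∧
        2 * (v.1 ^ 2 + v.2 ^ 2) ≤
          ((1 + 2 * π * lam * Real.cos (2 * π * θ n)) * v.1 + v.2) ^ 2 +
          ((2 * π * lam * Real.cos (2 * π * θ n)) * v.1 + v.2) ^ 2) ∧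
      (∀ v : ℝ × ℝ, v.1 * v.2 ≤ 0 →
        (v.1 - (2 * π * lam * Real.cos (2 * π * θ n)) * v.2) *
          (-v.1 + (1 + 2 * π * lam * Real.cos (2 * π * θ n)) * v.2) ≤ 0 ∧
        2 * (v.1 ^ 2 + v.2 ^ 2) ≤
          (v.1 - (2 * π * lam * Real.cos (2 * π * θ n)) * v.2) ^ 2 +
          (-v.1 + (1 + 2 * π * lam * Real.cos (2 * π * θ n)) * v.2) ^ 2) := by
  have hpi := Real.pi_pos
  -- basic consequences of the hypothesis on lam
  have hsqrt : Real.sqrt (1 + π ^ 2) < π * |lam| := by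
    rw [div_lt_iff₀ hpi] at hlam; linarith
  have hsq : 1 + π ^ 2 < π ^ 2 * lam ^ 2 := by
    have h0 : (0:ℝ) ≤ 1 + π ^ 2 := by positivity
    have := Real.sq_sqrt h0
    nlinarith [Real.sqrt_nonneg (1 + π ^ 2), sq_abs lam]
  have hlam1 : 1 < lam ^ 2 := by nlinarith
  have hlamabs : 1 < |lam| := by nlinarith [sq_abs lam, abs_nonneg lam]
  have hlam0 : (0:ℝ) < |lam| := by linarith
  have hlamne : lam ≠ 0 := by
    intro h
    rw [h, abs_zero] at hlam0
    exact lt_irrefl 0 hlam0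
  intro n
  set s := Real.sin (2 * π * θ n) with hs
  set c := Real.cos (2 * π * θ n) with hc
  have hsc : s ^ 2 + c ^ 2 = 1 := Real.sin_sq_add_cos_sq _
  -- |lam * s| < 1
  have ha := hd1 n
  have hb := hd2 n
  have hab := hopp n
  obtain ⟨ha1, ha2⟩ := ha
  obtain ⟨hb1, hb2⟩ := hb
  have hEL' := hEL n
  have hls : (lam * s) ^ 2 < 1 := by
    set a := θ n - θ (n + 1) with hadef
    set b := θ n - θ (n - 1) with hbdef
    have h1a : (0:ℝ) < 1 - a ^ 2 := by nlinarith
    have h1b : (0:ℝ) < 1 - b ^ 2 := by nlinarith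
    have h2 : (0:ℝ) ≤ a * b + 2 := by nlinarith
    have hls' : lam * s = -(a + b) := by rw [← hEL']; ring
    rw [hls']
    nlinarith [mul_pos h1a h1b, mul_nonneg (neg_nonneg.mpr hab) h2]
  have hls2 : lam ^ 2 * s ^ 2 < 1 := by nlinarith
  -- first claim
  have c1 : |s| < 1 / |lam| := by
    rw [lt_div_iff₀ hlam0]
    have : |s| * |lam| = |lam * s| := by rw [abs_mul, mul_comm]
    rw [this]
    have := abs_nonneg (lam * s)
    nlinarith [sq_abs (lam * s)]
  -- cos squared bound
  have hcc : lam ^ 2 - 1 < lam ^ 2 * c ^ 2 := by nlinarith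
  have hc2 : 1 - 1 / lam ^ 2 < c ^ 2 := by
    have hl2 : (0:ℝ) < lam ^ 2 := by linarith
    rw [show 1 - 1 / lam ^ 2 = (lam ^ 2 - 1) / lam ^ 2 by field_simp, div_lt_iff₀ hl2]
    nlinarith
  have c2 : Real.sqrt (1 - 1 / lam ^ 2) < |c| := by
    have h0 : (0:ℝ) ≤ 1 - 1 / lam ^ 2 := by
      rw [sub_nonneg, div_le_one (by linarith : (0:ℝ) < lam ^ 2)]; linarith
    calc Real.sqrt (1 - 1 / lam ^ 2) < Real.sqrt (c ^ 2) := Real.sqrt_lt_sqrt h0 hc2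
      _ = |c| := Real.sqrt_sq_eq_abs c
  -- third claim
  have hkey : 1 < π ^ 2 * (lam ^ 2 * c ^ 2) := by
    nlinarith [mul_pos (mul_pos hpi hpi) (by linarith : (0:ℝ) < lam ^ 2 * c ^ 2 - (lam ^ 2 - 1))]
  have hsq4 : 4 < (2 * π * lam * c) ^ 2 := by nlinarith
  have hm := hmin n
  have c3 : 2 < 2 * π * lam * c := by
    by_contra h
    push_neg at h
    nlinarith [mul_nonneg (by linarith : (0:ℝ) ≤ 2 - 2 * π * lam * c)
      (by linarith : (0:ℝ) ≤ 2 * π * lam * c + 2)]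
  refine ⟨c1, c2, c3, ?_, ?_⟩
  · rintro ⟨v1, v2⟩ hv
    simp only at hv ⊢
    constructor
    · nlinarith [sq_nonneg v1, sq_nonneg v2, mul_nonneg hv (by linarith : (0:ℝ) ≤ 2 * (2 * π * lam * c) + 1)]
    · nlinarith [sq_nonneg v1, sq_nonneg v2, mul_nonneg hv (by linarith : (0:ℝ) ≤ 2 * (2 * π * lam * c) + 1)]
  · rintro ⟨v1, v2⟩ hv
    simp only at hv ⊢
    constructor
    · nlinarith [sq_nonneg v1, sq_nonneg v2, mul_nonneg (neg_nonneg.mpr hv) (by linarith : (0:ℝ) ≤ 2 * (2 * π * lam * c) + 1)]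
    · nlinarith [sq_nonneg v1, sq_nonneg v2, mul_nonneg (neg_nonneg.mpr hv) (by linarith : (0:ℝ) ≤ 2 * (2 * π * lam * c) + 1)]
end

section
/- Let f : 𝔸 → 𝔸 be a conservative twist map whose linearization along an orbit admits an invariant field of half-lines δ_+ ⊆ T𝔸 with Df(δ_+) = δ_+ ∘ f and Dπ(δ_+) = ℝ_+ (δ_+ transverse to the vertical and oriented to the right). Then along this orbit, for all n ≥ 1, the slopes satisfy s_{−n} < s_{−n−1} < d_+ < s_{n+1} < s_n, where d_+ is the slope of δ_+ and s_k is the slope of G_k = Df^k(V ∘ f^{−k}). In particular the orbit lies in Green(f). -/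
/-!
Since `det A n = 1`, each `A n` preserves the wedge product of `ℝ²`; as it maps `(1, d n)` to a
positive multiple of `(1, d (n + 1))`, it maps the half-plane `{w | (1, d n) ∧ w > 0}` onto
`{w | (1, d (n + 1)) ∧ w > 0}`. These half-planes contain the vertical, hence every `G_j`, forwards
and backwards. Writing `w = w.1 • (1, d n) + ((1, d n) ∧ w) • (0, 1)`, the positive twist shows that
such a `w` with `w.1 ≥ 0` is mapped into the open right half-plane, so `G_j` points right for `j ≥ 1`
and left for `j ≤ -1`: this puts `d` between the backward and the forward slopes. Finally
`G_{j+1} ∧ G_j` does not change along the orbit, so it equals `G_1 ∧ V = (G_1).1 > 0`, and the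
slopes are strictly monotone in `j`.
-/

noncomputable def wedge (u v : ℝ × ℝ) : ℝ := (Module.Basis.finTwoProd ℝ).det ![u, v]

lemma wedge_eq (u v : ℝ × ℝ) : wedge u v = u.1 * v.2 - u.2 * v.1 := by
  simp [wedge, Module.Basis.det_apply, Matrix.det_fin_two, Module.Basis.toMatrix_apply, mul_comm]

lemma wedge_map (T : ℝ × ℝ →ₗ[ℝ] ℝ × ℝ) (u v : ℝ × ℝ) :
    wedge (T u) (T v) = LinearMap.det T * wedge u v := by
  rw [wedge, wedge, ← Module.Basis.det_comp]
  congr 1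
  funext i
  fin_cases i <;> rfl

lemma wedge_one_left (a : ℝ) (w : ℝ × ℝ) : wedge (1, a) w = w.2 - a * w.1 := by
  rw [wedge_eq]
  ring

lemma div_lt_div_of_wedge_pos {a b : ℝ × ℝ} (hab : 0 < a.1 * b.1) (hw : 0 < wedge a b) :
    a.2 / a.1 < b.2 / b.1 := by
  have ha : a.1 ≠ 0 := left_ne_zero_of_mul hab.ne'
  have hb : b.1 ≠ 0 := right_ne_zero_of_mul hab.ne'
  have hdiff : b.2 / b.1 - a.2 / a.1 = wedge a b / (a.1 * b.1) := by
    rw [wedge_eq]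
    field_simp
  linarith [div_pos hw hab]

section LineField

variable {T : ℝ × ℝ →ₗ[ℝ] ℝ × ℝ} {a b c : ℝ}

lemma wedge_one_left_pos_iff (hT : LinearMap.det T = 1) (hc : 0 < c)
    (hTa : T (1, a) = c • (1, b)) (w : ℝ × ℝ) :
    0 < wedge (1, b) (T w) ↔ 0 < wedge (1, a) w := by
  have hscale : c * wedge (1, b) (T w) = wedge (1, a) w := by
    have hinv := wedge_map T (1, a) w
    rw [hT, one_mul, hTa] at hinv
    rw [← hinv, wedge_eq, wedge_eq]
    simp only [Prod.smul_fst, Prod.smul_snd, smul_eq_mul]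
    ring
  rw [← hscale]
  exact (mul_pos_iff_of_pos_left hc).symm

lemma fst_map_eq (hTa : T (1, a) = c • (1, b)) (w : ℝ × ℝ) :
    (T w).1 = c * w.1 + wedge (1, a) w * (T (0, 1)).1 := by
  have hw : w = w.1 • ((1 : ℝ), a) + wedge (1, a) w • ((0 : ℝ), (1 : ℝ)) := by
    ext
    · simp
    · simp [wedge_one_left]; ring
  conv_lhs => rw [hw, map_add, map_smul, map_smul, hTa]
  simp only [Prod.fst_add, Prod.smul_fst, smul_eq_mul]
  ring

lemma fst_map_pos (hc : 0 < c) (htwist : 0 < (T (0, 1)).1) (hTa : T (1, a) = c • (1, b))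
    {w : ℝ × ℝ} (h1 : 0 ≤ w.1) (hw : 0 < wedge (1, a) w) : 0 < (T w).1 := by
  rw [fst_map_eq hTa]
  positivity

lemma fst_neg_of_fst_map_nonpos (hc : 0 < c) (htwist : 0 < (T (0, 1)).1)
    (hTa : T (1, a) = c • (1, b)) {w : ℝ × ℝ} (h1 : (T w).1 ≤ 0) (hw : 0 < wedge (1, a) w) :
    w.1 < 0 := by
  rw [fst_map_eq hTa] at h1
  nlinarith [mul_pos hw htwist]

end LineField

/-- With `A n = Df` at `fⁿ x` and `M k n = Df^k` at `fⁿ x`, `vertImage M j n` spans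
`G_j(fⁿ x)`, also for `j < 0`. -/
def vertImage (M : ℤ → ℤ → (ℝ × ℝ) ≃L[ℝ] (ℝ × ℝ)) (j n : ℤ) : ℝ × ℝ :=
  M j (n - j) ((0 : ℝ), (1 : ℝ))

section Orbit

variable {A : ℤ → (ℝ × ℝ) ≃L[ℝ] (ℝ × ℝ)} {M : ℤ → ℤ → (ℝ × ℝ) ≃L[ℝ] (ℝ × ℝ)} {d : ℤ → ℝ}

lemma vertImage_zero (hM0 : ∀ n : ℤ, M 0 n = ContinuousLinearEquiv.refl ℝ (ℝ × ℝ)) (n : ℤ) :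
    vertImage M 0 n = (0, 1) := by
  simp [vertImage, hM0]

lemma vertImage_succ (hMrec : ∀ k n : ℤ, M (k + 1) n = (M k n).trans (A (n + k))) (j n : ℤ) :
    vertImage M (j + 1) (n + 1) = A n (vertImage M j n) := by
  simp only [vertImage, show n + 1 - (j + 1) = n - j by ring, hMrec, sub_add_cancel]
  rfl

lemma wedge_vertImage_succ_shift
    (hdet : ∀ n : ℤ, LinearMap.det ((A n).toLinearEquiv.toLinearMap) = 1)
    (hMrec : ∀ k n : ℤ, M (k + 1) n = (M k n).trans (A (n + k))) (j n : ℤ) :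
    wedge (vertImage M (j + 1 + 1) (n + 1)) (vertImage M (j + 1) (n + 1)) =
      wedge (vertImage M (j + 1) n) (vertImage M j n) := by
  have hinv := wedge_map (A n).toLinearEquiv.toLinearMap (vertImage M (j + 1) n) (vertImage M j n)
  rw [hdet, one_mul] at hinv
  rw [vertImage_succ hMrec, vertImage_succ hMrec]
  exact hinv

variable (hdet : ∀ n : ℤ, LinearMap.det ((A n).toLinearEquiv.toLinearMap) = 1)
  (htwist : ∀ n : ℤ, 0 < (A n ((0 : ℝ), (1 : ℝ))).1)
  (hM0 : ∀ n : ℤ, M 0 n = ContinuousLinearEquiv.refl ℝ (ℝ × ℝ))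
  (hMrec : ∀ k n : ℤ, M (k + 1) n = (M k n).trans (A (n + k)))
  (hd : ∀ n : ℤ, ∃ c : ℝ, 0 < c ∧ A n ((1 : ℝ), d n) = c • ((1 : ℝ), d (n + 1)))
include hdet hM0 hMrec hd

lemma wedge_vertImage_pos (j n : ℤ) : 0 < wedge (1, d n) (vertImage M j n) := by
  have hstep : ∀ j n, 0 < wedge (1, d (n + 1)) (vertImage M (j + 1) (n + 1)) ↔
      0 < wedge (1, d n) (vertImage M j n) := fun j n => by
    obtain ⟨c, hc, hAd⟩ := hd n
    rw [vertImage_succ hMrec]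
    exact wedge_one_left_pos_iff (hdet n) hc hAd _
  induction j using Int.induction_on generalizing n with
  | zero => simp [vertImage_zero hM0, wedge_one_left]
  | succ j ih =>
    obtain ⟨n, rfl⟩ : ∃ m, n = m + 1 := ⟨n - 1, by ring⟩
    exact (hstep j n).2 (ih n)
  | pred j ih =>
    have h := (hstep (-(j : ℤ) - 1) n).1
    rw [sub_add_cancel] at h
    exact h (ih (n + 1))

include htwist

lemma vertImage_succ_fst_pos {j n : ℤ} (h : 0 ≤ (vertImage M j n).1) :
    0 < (vertImage M (j + 1) (n + 1)).1 := by
  obtain ⟨c, hc, hAd⟩ := hd n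
  rw [vertImage_succ hMrec]
  exact fst_map_pos hc (htwist n) hAd h (wedge_vertImage_pos hdet hM0 hMrec hd j n)

lemma vertImage_fst_neg_of_succ {j n : ℤ} (h : (vertImage M (j + 1) (n + 1)).1 ≤ 0) :
    (vertImage M j n).1 < 0 := by
  obtain ⟨c, hc, hAd⟩ := hd n
  rw [vertImage_succ hMrec] at h
  exact fst_neg_of_fst_map_nonpos hc (htwist n) hAd h (wedge_vertImage_pos hdet hM0 hMrec hd j n)

lemma vertImage_fst_pos {k : ℤ} (hk : 1 ≤ k) (n : ℤ) : 0 < (vertImage M k n).1 := by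
  induction k, hk using Int.leInduction generalizing n with
  | base =>
    obtain ⟨n, rfl⟩ : ∃ m, n = m + 1 := ⟨n - 1, by ring⟩
    simpa using vertImage_succ_fst_pos hdet htwist hM0 hMrec hd (j := 0) (n := n)
      (by simp [vertImage_zero hM0])
  | succ k _ ih =>
    obtain ⟨n, rfl⟩ : ∃ m, n = m + 1 := ⟨n - 1, by ring⟩
    exact vertImage_succ_fst_pos hdet htwist hM0 hMrec hd (ih n).le

lemma vertImage_fst_neg {k : ℤ} (hk : 1 ≤ k) (n : ℤ) : (vertImage M (-k) n).1 < 0 := by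
  induction k, hk using Int.leInduction generalizing n with
  | base =>
    refine vertImage_fst_neg_of_succ hdet htwist hM0 hMrec hd ?_
    simp [vertImage_zero hM0]
  | succ k _ ih =>
    refine vertImage_fst_neg_of_succ hdet htwist hM0 hMrec hd ?_
    rw [show -(k + 1) + 1 = -k by ring]
    exact (ih (n + 1)).le

lemma wedge_vertImage_succ_pos (j n : ℤ) :
    0 < wedge (vertImage M (j + 1) n) (vertImage M j n) := by
  have hstep := wedge_vertImage_succ_shift hdet hMrec
  induction j using Int.induction_on generalizing n with
  | zero =>
    rw [zero_add, vertImage_zero hM0, wedge_eq]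
    simpa using vertImage_fst_pos hdet htwist hM0 hMrec hd le_rfl n
  | succ j ih =>
    obtain ⟨n, rfl⟩ : ∃ m, n = m + 1 := ⟨n - 1, by ring⟩
    rw [hstep]
    exact ih n
  | pred j ih =>
    have h := hstep (-(j : ℤ) - 1) n
    rw [sub_add_cancel] at h ⊢
    rw [← h]
    exact ih (n + 1)

end Orbit

/-- Criterion (4) ⟹ (0) for `Green(f)`: if along an orbit the symplectic
linearized cocycle `A` (with positive twist) admits an invariant field of
half-lines `δ₊ = ℝ₊(1, d n)` oriented to the right, then the slopes `s_k` of
the images `G_k = Df^k(V)` of the vertical satisfy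
`s_{−k} < s_{−k−1} < d < s_{k+1} < s_k` for all `k ≥ 1`; in particular the
orbit lies in `Green(f)`. Here `M k n` denotes `Df^k` based at site `n`. -/
theorem stmt18 (A : ℤ → (ℝ × ℝ) ≃L[ℝ] (ℝ × ℝ))
    (hdet : ∀ n : ℤ, LinearMap.det ((A n).toLinearEquiv.toLinearMap) = 1)
    (htwist : ∀ n : ℤ, 0 < (A n ((0 : ℝ), (1 : ℝ))).1)
    (M : ℤ → ℤ → (ℝ × ℝ) ≃L[ℝ] (ℝ × ℝ))
    (hM0 : ∀ n : ℤ, M 0 n = ContinuousLinearEquiv.refl ℝ (ℝ × ℝ))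
    (hMrec : ∀ k n : ℤ, M (k + 1) n = (M k n).trans (A (n + k)))
    (d : ℤ → ℝ)
    (hd : ∀ n : ℤ, ∃ c : ℝ, 0 < c ∧ A n ((1 : ℝ), d n) = c • ((1 : ℝ), d (n + 1))) :
    ∀ n k : ℤ, 1 ≤ k →
      (M k (n - k) ((0 : ℝ), (1 : ℝ))).1 ≠ 0 ∧
      (M (-k) (n + k) ((0 : ℝ), (1 : ℝ))).1 ≠ 0 ∧
      ((fun j : ℤ => (M j (n - j) ((0 : ℝ), (1 : ℝ))).2 /
          (M j (n - j) ((0 : ℝ), (1 : ℝ))).1) (-k) <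
        (fun j : ℤ => (M j (n - j) ((0 : ℝ), (1 : ℝ))).2 /
          (M j (n - j) ((0 : ℝ), (1 : ℝ))).1) (-(k + 1)) ∧
       (fun j : ℤ => (M j (n - j) ((0 : ℝ), (1 : ℝ))).2 /
          (M j (n - j) ((0 : ℝ), (1 : ℝ))).1) (-(k + 1)) < d n ∧
       d n < (fun j : ℤ => (M j (n - j) ((0 : ℝ), (1 : ℝ))).2 /
          (M j (n - j) ((0 : ℝ), (1 : ℝ))).1) (k + 1) ∧
       (fun j : ℤ => (M j (n - j) ((0 : ℝ), (1 : ℝ))).2 /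
          (M j (n - j) ((0 : ℝ), (1 : ℝ))).1) (k + 1) <
        (fun j : ℤ => (M j (n - j) ((0 : ℝ), (1 : ℝ))).2 /
          (M j (n - j) ((0 : ℝ), (1 : ℝ))).1) k) := by
  intro n k hk
  have hk1 : 1 ≤ k + 1 := by linarith
  have hpos {j : ℤ} (hj : 1 ≤ j) := vertImage_fst_pos hdet htwist hM0 hMrec hd hj n
  have hneg {j : ℤ} (hj : 1 ≤ j) := vertImage_fst_neg hdet htwist hM0 hMrec hd hj n
  have habove (j : ℤ) : d n * (vertImage M j n).1 < (vertImage M j n).2 := by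
    simpa [wedge_one_left] using wedge_vertImage_pos hdet hM0 hMrec hd j n
  have hback := wedge_vertImage_succ_pos hdet htwist hM0 hMrec hd (-(k + 1)) n
  rw [show -(k + 1) + 1 = -k by ring] at hback
  refine ⟨(hpos hk).ne', ?_, ?_, ?_, ?_, ?_⟩
  · rw [show n + k = n - -k by ring]
    exact (hneg hk).ne
  · exact div_lt_div_of_wedge_pos (mul_pos_of_neg_of_neg (hneg hk) (hneg hk1)) hback
  · exact (div_lt_iff_of_neg (hneg hk1)).2 (habove _)
  · exact (lt_div_iff₀ (hpos hk1)).2 (habove _)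
  · exact div_lt_div_of_wedge_pos (mul_pos (hpos hk1) (hpos hk))
      (wedge_vertImage_succ_pos hdet htwist hM0 hMrec hd k n)
end
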